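/- Let W = -W_α - W_α^T where W_α is the (M-1)×(M-1) WSGD Toeplitz matrix with 1 < α < 2, and let D = diag(d_1, …, d_{M-1}) where d_i = d(x_i) for grid points x_i = x_L + i h of a function d. If d is convex and nonnegative on [x_L, x_R], or concave and nonpositive, then for all u ∈ ℝ^{M-1}: u^T D W D u ≤ 2 max_i(d_i²) · u^T W u. -/

import Mathlib

open scoped BigOperators Real
open Matrix

noncomputable def gbinom (α : ℝ) (k : ℕ) : ℝ :=
  (∏ i ∈ Finset.range k, (α - i)) / (Nat.factorial k)

noncomputable def gcoef (α : ℝ) (k : ℕ) : ℝ := (-1) ^ k * gbinom α k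

noncomputable def wcoef (α : ℝ) : ℕ → ℝ
  | 0 => α / 2 * gcoef α 0
  | (k + 1) => α / 2 * gcoef α (k + 1) + (2 - α) / 2 * gcoef α k

/-- The Toeplitz matrix `W_α`: entry `(j,k)` is `w_{j-k+1}` (zero when `j-k+1 < 0`). -/
noncomputable def Wmat (n : ℕ) (α : ℝ) : Matrix (Fin n) (Fin n) ℝ :=
  fun j k => if (k : ℕ) ≤ (j : ℕ) + 1 then wcoef α ((j : ℕ) + 1 - (k : ℕ)) else 0

lemma gbinom_zero (α : ℝ) : gbinom α 0 = 1 := by simp [gbinom]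

lemma gbinom_succ (α : ℝ) (k : ℕ) :
    gbinom α (k + 1) = gbinom α k * (α - k) / (k + 1) := by
  have h1 : ((Nat.factorial k : ℝ)) ≠ 0 := by positivity
  have h2 : ((k : ℝ) + 1) ≠ 0 := by positivity
  unfold gbinom
  rw [Finset.prod_range_succ, Nat.factorial_succ]

  field_simp
  ring_nf
  push_cast; ring

lemma gbinom_one (α : ℝ) : gbinom α 1 = α := by
  rw [gbinom_succ, gbinom_zero]; norm_num

lemma gbinom_two (α : ℝ) : gbinom α 2 = α * (α - 1) / 2 := by
  rw [gbinom_succ, gbinom_one]; norm_num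

lemma gbinom_aux (α : ℝ) : ∀ k : ℕ, α * gbinom (α - 1) k = (α - k) * gbinom α k := by
  intro k
  induction k with
  | zero => simp [gbinom_zero]
  | succ k ih =>
      rw [gbinom_succ, gbinom_succ]
      have h2 : ((k : ℝ) + 1) ≠ 0 := by positivity
      field_simp
      push_cast
      linear_combination (α - 1 - (k:ℝ)) * ih

lemma gbinom_pascal (α : ℝ) (k : ℕ) :
    gbinom α (k + 1) = gbinom (α - 1) (k + 1) + gbinom (α - 1) k := by
  have h2 : ((k : ℝ) + 1) ≠ 0 := by positivity
  have := gbinom_aux α k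
  rw [gbinom_succ, gbinom_succ]
  field_simp
  linear_combination (-1 : ℝ) * this

section signs
variable {α : ℝ} (h1 : 1 < α) (h2 : α < 2)

include h1 h2 in
lemma sign1 : ∀ m : ℕ, 0 ≤ (-1 : ℝ) ^ m * gbinom (α - 1) (m + 1) := by
  intro m
  induction m with
  | zero => simp [gbinom_one]; linarith
  | succ m ih =>
      rw [gbinom_succ]
      have hm : (0:ℝ) < (m:ℝ) + 1 + 1 := by positivity
      have hneg : α - 1 - (m + 1 : ℕ) ≤ 0 := by push_cast; linarith
      rw [pow_succ]
      rw [div_eq_mul_inv]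
      push_cast
      have : (-1:ℝ)^m * gbinom (α-1) (m+1) * (α - 1 - (m+1)) ≤ 0 := by
        apply mul_nonpos_of_nonneg_of_nonpos ih
        push_cast at hneg ⊢; linarith
      have hinv : (0:ℝ) ≤ ((m:ℝ)+1+1)⁻¹ := by positivity
      nlinarith [this, hinv]

include h1 h2 in
lemma sign2 : ∀ m : ℕ, 0 ≤ (-1 : ℝ) ^ m * gbinom α (m + 2) := by
  intro m
  induction m with
  | zero => simp [gbinom_two]; nlinarith
  | succ m ih =>
      rw [gbinom_succ]
      have hm0 : (0:ℝ) ≤ (m:ℝ) := Nat.cast_nonneg m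
      have hneg : α - ((m:ℝ) + 2) ≤ 0 := by linarith
      have hcast : ((m + 2 : ℕ) : ℝ) = (m:ℝ) + 2 := by push_cast; ring
      rw [pow_succ, hcast, div_eq_mul_inv]
      have : (-1:ℝ)^m * gbinom α (m+2) * (α - ((m:ℝ)+2)) ≤ 0 :=
        mul_nonpos_of_nonneg_of_nonpos ih hneg
      have hinv : (0:ℝ) ≤ ((m:ℝ)+2+1)⁻¹ := by positivity
      nlinarith [this, hinv]

include h1 h2 in
lemma gcoef_nonneg : ∀ k : ℕ, 2 ≤ k → 0 ≤ gcoef α k := by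
  intro k hk
  obtain ⟨m, rfl⟩ : ∃ m, k = m + 2 := ⟨k - 2, by omega⟩
  have := sign2 h1 h2 m
  unfold gcoef
  have : (-1:ℝ)^(m+2) = (-1:ℝ)^m := by ring
  rw [this]
  exact sign2 h1 h2 m

include h1 h2 in
lemma wcoef_nonneg : ∀ k : ℕ, 3 ≤ k → 0 ≤ wcoef α k := by
  intro k hk
  obtain ⟨m, rfl⟩ : ∃ m, k = m + 1 := ⟨k - 1, by omega⟩
  show 0 ≤ α / 2 * gcoef α (m + 1) + (2 - α) / 2 * gcoef α m
  have g1 := gcoef_nonneg h1 h2 (m+1) (by omega)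
  have g2 := gcoef_nonneg h1 h2 m (by omega)
  have : (0:ℝ) < α/2 := by linarith
  have : (0:ℝ) < (2-α)/2 := by linarith
  nlinarith

include h1 in
lemma wcoef_one_neg : wcoef α 1 < 0 := by
  show α / 2 * gcoef α 1 + (2 - α) / 2 * gcoef α 0 < 0
  unfold gcoef
  rw [gbinom_one, gbinom_zero]
  nlinarith

end signs

noncomputable def cc (α : ℝ) (m : ℕ) : ℝ :=
  wcoef α (m + 1) + if m = 1 then wcoef α 0 else 0

section sums
variable {α : ℝ} (h1 : 1 < α) (h2 : α < 2)

lemma Gs_eq : ∀ N : ℕ, ∑ k ∈ Finset.range (N + 1), gcoef α k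
    = (-1) ^ N * gbinom (α - 1) N := by
  intro N
  induction N with
  | zero => simp [gcoef, gbinom_zero]
  | succ N ih =>
      rw [Finset.sum_range_succ, ih]
      unfold gcoef
      rw [gbinom_pascal]
      ring

lemma Ws_eq : ∀ N : ℕ, ∑ k ∈ Finset.range (N + 1), wcoef α k
    = α / 2 * (∑ k ∈ Finset.range (N + 1), gcoef α k)
      + (2 - α) / 2 * (∑ k ∈ Finset.range N, gcoef α k) := by
  intro N
  induction N with
  | zero => simp [wcoef]
  | succ N ih =>
      rw [Finset.sum_range_succ, ih, Finset.sum_range_succ (f := gcoef α) (n := N + 1),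
        Finset.sum_range_succ (f := gcoef α) (n := N)]
      show _ + (α / 2 * gcoef α (N + 1) + (2 - α) / 2 * gcoef α N) = _
      ring

include h1 h2 in
lemma Ws_nonpos : ∀ N : ℕ, 2 ≤ N → ∑ k ∈ Finset.range (N + 1), wcoef α k ≤ 0 := by
  intro N hN
  obtain ⟨m, rfl⟩ : ∃ m, N = m + 2 := ⟨N - 2, by omega⟩
  rw [Ws_eq, Gs_eq, Gs_eq]
  have s1 := sign1 h1 h2 (m + 1)
  have s2 := sign1 h1 h2 m
  have e1 : (-1:ℝ) ^ (m + 2) * gbinom (α-1) (m+2) ≤ 0 := by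
    have : (-1:ℝ) ^ (m + 2) = -((-1:ℝ) ^ (m+1)) := by ring
    rw [this]; nlinarith
  have e2 : (-1:ℝ) ^ (m + 1) * gbinom (α-1) (m+1) ≤ 0 := by
    have : (-1:ℝ) ^ (m + 1) = -((-1:ℝ) ^ m) := by ring
    rw [this]; nlinarith
  nlinarith

include h1 h2 in
lemma cc_nonneg : ∀ m : ℕ, 1 ≤ m → 0 ≤ cc α m := by
  intro m hm
  match m, hm with
  | 1, _ =>
      show 0 ≤ wcoef α 2 + if (1:ℕ) = 1 then wcoef α 0 else 0
      rw [if_pos rfl]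
      show 0 ≤ (α / 2 * gcoef α 2 + (2 - α) / 2 * gcoef α 1) + α / 2 * gcoef α 0
      unfold gcoef
      rw [gbinom_zero, gbinom_one, gbinom_two]
      norm_num
      nlinarith [mul_pos (mul_pos (by linarith : (0:ℝ) < α) (by linarith : (0:ℝ) < α + 2)) (by linarith : (0:ℝ) < α - 1)]
  | (m + 2), _ =>
      unfold cc
      rw [if_neg (by omega), add_zero]
      exact wcoef_nonneg h1 h2 (m + 3) (by omega)

include h1 h2 in
lemma cc_sum_le : ∀ n : ℕ, 1 ≤ n →
    ∑ m ∈ Finset.Icc 1 (n - 1), cc α m ≤ -(wcoef α 1) := by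
  have key : ∀ p : ℕ, ∑ m ∈ Finset.Icc 1 (p + 1), cc α m
      = ∑ k ∈ Finset.range (p + 3), wcoef α k - wcoef α 1 := by
    intro p
    induction p with
    | zero =>
        show ∑ m ∈ Finset.Icc 1 1, cc α m = _
        rw [Finset.Icc_self, Finset.sum_singleton]
        show wcoef α 2 + (if (1:ℕ) = 1 then wcoef α 0 else 0) = _
        rw [if_pos rfl]
        rw [Finset.sum_range_succ, Finset.sum_range_succ, Finset.sum_range_one]
        ring
    | succ p ih =>
        rw [Finset.sum_Icc_succ_top (by omega : 1 ≤ p + 1 + 1), ih]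
        have hc : cc α (p + 1 + 1) = wcoef α (p + 3) := by
          unfold cc
          rw [if_neg (by omega), add_zero]
        rw [hc, show p + 1 + 3 = (p + 3) + 1 by omega,
          Finset.sum_range_succ (f := wcoef α) (n := p + 3)]
        ring
  intro n hn
  match n, hn with
  | 1, _ =>
      simp only [Nat.sub_self]
      rw [show Finset.Icc 1 0 = ∅ from rfl, Finset.sum_empty]
      linarith [wcoef_one_neg h1 (α := α)]
  | (p + 2), _ =>
      have : p + 2 - 1 = p + 1 := by omega
      rw [this, key p]
      have := Ws_nonpos h1 h2 (p + 2) (by omega)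
      linarith

end sums

lemma quad_nonneg {n : ℕ} (A : Matrix (Fin n) (Fin n) ℝ)
    (hsym : ∀ j k, A j k = A k j)
    (hoff : ∀ j k, j ≠ k → A j k ≤ 0)
    (hrow : ∀ j, 0 ≤ ∑ k, A j k) (u : Fin n → ℝ) :
    0 ≤ ∑ j, ∑ k, A j k * u j * u k := by
  have S1 : ∑ j, ∑ k, A j k / 2 * u j ^ 2 = ∑ j, (∑ k, A j k) * u j ^ 2 / 2 := by
    refine Finset.sum_congr rfl fun j _ => ?_
    calc ∑ k, A j k / 2 * u j ^ 2 = ∑ k, A j k * (u j ^ 2 / 2) :=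
          Finset.sum_congr rfl fun k _ => by ring
      _ = (∑ k, A j k) * (u j ^ 2 / 2) := (Finset.sum_mul ..).symm
      _ = (∑ k, A j k) * u j ^ 2 / 2 := by ring
  have S2 : ∑ j, ∑ k, A j k / 2 * u k ^ 2 = ∑ j, (∑ k, A j k) * u j ^ 2 / 2 := by
    rw [Finset.sum_comm]
    refine Finset.sum_congr rfl fun k _ => ?_
    calc ∑ x, A x k / 2 * u k ^ 2 = ∑ x, A k x * (u k ^ 2 / 2) :=
          Finset.sum_congr rfl fun x _ => by rw [hsym x k]; ring
      _ = (∑ x, A k x) * (u k ^ 2 / 2) := (Finset.sum_mul ..).symm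
      _ = (∑ x, A k x) * u k ^ 2 / 2 := by ring
  have iden : ∑ j, ∑ k, A j k * u j * u k
      = ∑ j, (∑ k, A j k) * u j ^ 2 - ∑ j, ∑ k, A j k / 2 * (u j - u k) ^ 2 := by
    have step : ∑ j, ∑ k, A j k * u j * u k
        = ∑ j, ∑ k, (A j k / 2 * u j ^ 2 + A j k / 2 * u k ^ 2
            - A j k / 2 * (u j - u k) ^ 2) :=
      Finset.sum_congr rfl fun j _ => Finset.sum_congr rfl fun k _ => by ring
    rw [step]
    simp only [Finset.sum_add_distrib, Finset.sum_sub_distrib]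
    have hS : ∑ j, (∑ k, A j k) * u j ^ 2 / 2 = (∑ j, (∑ k, A j k) * u j ^ 2) / 2 :=
      (Finset.sum_div ..).symm
    linear_combination S1 + S2 + 2 * hS
  rw [iden]
  have P1 : 0 ≤ ∑ j, (∑ k, A j k) * u j ^ 2 :=
    Finset.sum_nonneg fun j _ => mul_nonneg (hrow j) (sq_nonneg _)
  have P2 : ∑ j, ∑ k, A j k / 2 * (u j - u k) ^ 2 ≤ 0 := by
    refine Finset.sum_nonpos fun j _ => Finset.sum_nonpos fun k _ => ?_
    by_cases hjk : j = k
    · subst hjk; simp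
    · exact mul_nonpos_of_nonpos_of_nonneg (by linarith [hoff j k hjk]) (sq_nonneg _)
  linarith

section master
variable {α : ℝ} (h1 : 1 < α) (h2 : α < 2)

include h1 h2 in
lemma master {n : ℕ} (hn : 0 < n) (dd : ℕ → ℝ)
    (hdd0 : ∀ i, i < n → 0 ≤ dd i)
    (hconv : ∀ j m : ℕ, 1 ≤ m → m ≤ j → j + m < n →
      2 * dd j ≤ dd (j - m) + dd (j + m))
    (u : Fin n → ℝ) :
    u ⬝ᵥ ((Matrix.diagonal (fun i : Fin n => dd i) * (-(Wmat n α) - (Wmat n α)ᵀ) *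
        Matrix.diagonal (fun i : Fin n => dd i))).mulVec u ≤
      2 * (Finset.univ.sup' (Finset.univ_nonempty_iff.mpr ⟨⟨0, hn⟩⟩)
            fun i : Fin n => (dd (i : ℕ)) ^ 2) *
        (u ⬝ᵥ (-(Wmat n α) - (Wmat n α)ᵀ).mulVec u) := by
  set W : Matrix (Fin n) (Fin n) ℝ := -(Wmat n α) - (Wmat n α)ᵀ with hWdef
  set M : ℝ := Finset.univ.sup' (Finset.univ_nonempty_iff.mpr ⟨⟨0, hn⟩⟩)
      (fun i : Fin n => (dd (i : ℕ)) ^ 2) with hMdef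
  -- entry lemmas
  have hWentry : ∀ j k : Fin n, W j k = -(Wmat n α j k) - Wmat n α k j := by
    intro j k
    simp [hWdef, Matrix.sub_apply, Matrix.neg_apply, Matrix.transpose_apply]
  have hWmat_diag : ∀ j : Fin n, Wmat n α j j = wcoef α 1 := by
    intro j
    unfold Wmat
    rw [if_pos (by omega : (j:ℕ) ≤ (j:ℕ) + 1), show (j:ℕ) + 1 - (j:ℕ) = 1 by omega]
  have hWdiag : ∀ j : Fin n, W j j = -2 * wcoef α 1 := by
    intro j
    rw [hWentry, hWmat_diag]
    ring
  have hWlt : ∀ j k : Fin n, (k:ℕ) < (j:ℕ) → W j k = -(cc α ((j:ℕ) - (k:ℕ))) := by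
    intro j k hlt
    have ea : Wmat n α j k = wcoef α (((j:ℕ) - (k:ℕ)) + 1) := by
      unfold Wmat
      rw [if_pos (by omega : (k:ℕ) ≤ (j:ℕ) + 1),
        show (j:ℕ) + 1 - (k:ℕ) = ((j:ℕ) - (k:ℕ)) + 1 by omega]
    have eb : Wmat n α k j = if (j:ℕ) - (k:ℕ) = 1 then wcoef α 0 else 0 := by
      unfold Wmat
      by_cases hd : (j:ℕ) - (k:ℕ) = 1
      · rw [if_pos hd, if_pos (by omega : (j:ℕ) ≤ (k:ℕ) + 1),
          show (k:ℕ) + 1 - (j:ℕ) = 0 by omega]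
      · rw [if_neg hd, if_neg (by omega : ¬ (j:ℕ) ≤ (k:ℕ) + 1)]
    rw [hWentry, ea, eb]
    unfold cc
    by_cases hd : (j:ℕ) - (k:ℕ) = 1
    · rw [if_pos hd]
      ring
    · rw [if_neg hd]
      ring
  have hWsym : ∀ j k : Fin n, W j k = W k j := by
    intro j k
    rw [hWentry, hWentry]
    ring
  -- facts about M
  have hM1 : ∀ i : Fin n, dd (i : ℕ) ^ 2 ≤ M := fun i =>
    Finset.le_sup' (fun i : Fin n => (dd (i : ℕ)) ^ 2) (Finset.mem_univ i)
  have hM0 : 0 ≤ M := le_trans (sq_nonneg _) (hM1 ⟨0, hn⟩)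
  have hM1' : ∀ i : ℕ, i < n → dd i ^ 2 ≤ M := fun i hi => hM1 ⟨i, hi⟩
  have hprod : ∀ i k : Fin n, dd (i:ℕ) * dd (k:ℕ) ≤ M := by
    intro i k
    nlinarith [hM1 i, hM1 k, sq_nonneg (dd (i:ℕ) - dd (k:ℕ))]
  -- the comparison matrix
  set A : Matrix (Fin n) (Fin n) ℝ :=
    fun j k => W j k * (2 * M - dd (j:ℕ) * dd (k:ℕ)) with hAdef
  have hAsym : ∀ j k, A j k = A k j := by
    intro j k
    show W j k * _ = W k j * _
    rw [hWsym j k]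
    ring
  have hWoff : ∀ j k : Fin n, j ≠ k → W j k ≤ 0 := by
    intro j k hne
    rcases Nat.lt_trichotomy (k:ℕ) (j:ℕ) with hlt | heq | hgt
    · rw [hWlt j k hlt]
      have := cc_nonneg h1 h2 ((j:ℕ) - (k:ℕ)) (by omega)
      linarith
    · exact absurd (Fin.ext heq.symm) hne
    · rw [hWsym, hWlt k j hgt]
      have := cc_nonneg h1 h2 ((k:ℕ) - (j:ℕ)) (by omega)
      linarith
  have hAoff : ∀ j k, j ≠ k → A j k ≤ 0 := by
    intro j k hne
    have hfac : 0 ≤ 2 * M - dd (j:ℕ) * dd (k:ℕ) := by linarith [hprod j k]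
    exact mul_nonpos_of_nonpos_of_nonneg (hWoff j k hne) hfac
  -- row sums
  have hrow : ∀ j, 0 ≤ ∑ k, A j k := by
    intro j
    have hjlt : (j:ℕ) < n := j.isLt
    set jn : ℕ := (j : ℕ) with hjn
    set F : ℕ → ℝ :=
      fun k => cc α ((jn - k) + (k - jn)) * (2 * M - dd jn * dd k) with hF
    have hAG : ∑ k : Fin n, A j k
        = A j j + ∑ k ∈ (Finset.range n).erase jn, (-(F k)) := by
      rw [← Finset.add_sum_erase _ _ (Finset.mem_univ j)]
      congr 1
      refine Finset.sum_bij (i := fun (k : Fin n) (_ : k ∈ Finset.univ.erase j) => (k:ℕ))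
        ?_ ?_ ?_ ?_
      · intro k hk
        have hne := Finset.ne_of_mem_erase hk
        simp only [Finset.mem_erase, Finset.mem_range]
        exact ⟨fun hc => hne (Fin.ext hc), k.isLt⟩
      · intro k1 _ k2 _ he
        exact Fin.ext he
      · intro b hb
        simp only [Finset.mem_erase, Finset.mem_range] at hb
        exact ⟨⟨b, hb.2⟩, Finset.mem_erase.mpr
          ⟨fun hc => hb.1 (congrArg Fin.val hc), Finset.mem_univ _⟩, rfl⟩
      · intro k hk
        have hne : k ≠ j := Finset.ne_of_mem_erase hk
        show W j k * (2 * M - dd jn * dd (k:ℕ))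
          = -(cc α ((jn - (k:ℕ)) + ((k:ℕ) - jn)) * (2 * M - dd jn * dd (k:ℕ)))
        rcases Nat.lt_trichotomy (k:ℕ) jn with hlt | heq | hgt
        · rw [hWlt j k hlt, show (jn - (k:ℕ)) + ((k:ℕ) - jn) = jn - (k:ℕ) by omega]
          ring
        · exact absurd (Fin.ext heq) (fun hc => hne hc)
        · rw [hWsym, hWlt k j hgt,
            show (jn - (k:ℕ)) + ((k:ℕ) - jn) = (k:ℕ) - jn by omega]
          ring
    have hAjj : A j j = (-2 * wcoef α 1) * (2 * M - dd jn ^ 2) := by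
      show W j j * (2 * M - dd jn * dd jn) = _
      rw [hWdiag]
      ring
    -- reindex the off-diagonal sum by distance
    have reindex : ∑ k ∈ (Finset.range n).erase jn, F k
        = ∑ m ∈ Finset.Icc 1 (n - 1),
            ((if m ≤ jn then F (jn - m) else 0) + (if jn + m < n then F (jn + m) else 0)) := by
      rw [Finset.sum_add_distrib]
      have hsplit : (Finset.range n).erase jn
          = Finset.range jn ∪ Finset.Ico (jn + 1) n := by
        ext a
        simp only [Finset.mem_erase, Finset.mem_range, Finset.mem_union, Finset.mem_Ico]
        omega
      have hdisj : Disjoint (Finset.range jn) (Finset.Ico (jn + 1) n) := by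
        rw [Finset.disjoint_left]
        intro a ha hb
        simp only [Finset.mem_range] at ha
        simp only [Finset.mem_Ico] at hb
        omega
      rw [hsplit, Finset.sum_union hdisj]
      have hL : ∑ m ∈ Finset.Icc 1 (n - 1), (if m ≤ jn then F (jn - m) else 0)
          = ∑ k ∈ Finset.range jn, F k := by
        rw [← Finset.sum_filter]
        have hfil : (Finset.Icc 1 (n - 1)).filter (fun m => m ≤ jn) = Finset.Icc 1 jn := by
          ext a
          simp only [Finset.mem_filter, Finset.mem_Icc]
          omega
        rw [hfil]
        refine Finset.sum_nbij' (i := fun m => jn - m) (j := fun k => jn - k) ?_ ?_ ?_ ?_ ?_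
        · intro a ha
          simp only [Finset.mem_Icc] at ha
          simp only [Finset.mem_range]
          omega
        · intro a ha
          simp only [Finset.mem_range] at ha
          simp only [Finset.mem_Icc]
          omega
        · intro a ha
          simp only [Finset.mem_Icc] at ha
          omega
        · intro a ha
          simp only [Finset.mem_range] at ha
          omega
        · intro a _
          rfl
      have hR : ∑ m ∈ Finset.Icc 1 (n - 1), (if jn + m < n then F (jn + m) else 0)
          = ∑ k ∈ Finset.Ico (jn + 1) n, F k := by
        rw [← Finset.sum_filter]
        have hfil : (Finset.Icc 1 (n - 1)).filter (fun m => jn + m < n)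
            = Finset.Icc 1 (n - 1 - jn) := by
          ext a
          simp only [Finset.mem_filter, Finset.mem_Icc]
          omega
        rw [hfil]
        refine Finset.sum_nbij' (i := fun m => jn + m) (j := fun k => k - jn) ?_ ?_ ?_ ?_ ?_
        · intro a ha
          simp only [Finset.mem_Icc] at ha
          simp only [Finset.mem_Ico]
          omega
        · intro a ha
          simp only [Finset.mem_Ico] at ha
          simp only [Finset.mem_Icc]
          omega
        · intro a ha
          simp only [Finset.mem_Icc] at ha
          omega
        · intro a ha
          simp only [Finset.mem_Ico] at ha
          omega
        · intro a _
          rfl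
      rw [hL, hR]
    -- per-distance bound
    have perm : ∀ m ∈ Finset.Icc 1 (n - 1),
        (if m ≤ jn then F (jn - m) else 0) + (if jn + m < n then F (jn + m) else 0)
          ≤ cc α m * (2 * (2 * M - dd jn ^ 2)) := by
      intro m hm
      simp only [Finset.mem_Icc] at hm
      have hc : 0 ≤ cc α m := cc_nonneg h1 h2 m (by omega)
      have hdj : 0 ≤ dd jn := hdd0 jn hjlt
      have hMj : dd jn ^ 2 ≤ M := hM1' jn hjlt
      by_cases hLc : m ≤ jn
      · have hFL : F (jn - m) = cc α m * (2 * M - dd jn * dd (jn - m)) := by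
          show cc α ((jn - (jn - m)) + ((jn - m) - jn)) * _ = _
          rw [show (jn - (jn - m)) + ((jn - m) - jn) = m by omega]
        have hdL : 0 ≤ dd (jn - m) := hdd0 _ (by omega)
        by_cases hRc : jn + m < n
        · have hFR : F (jn + m) = cc α m * (2 * M - dd jn * dd (jn + m)) := by
            show cc α ((jn - (jn + m)) + ((jn + m) - jn)) * _ = _
            rw [show (jn - (jn + m)) + ((jn + m) - jn) = m by omega]
          rw [if_pos hLc, if_pos hRc, hFL, hFR]
          have hcv := hconv jn m (by omega) hLc hRc
          nlinarith [mul_nonneg (mul_nonneg hc hdj) (sub_nonneg.mpr hcv)]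
        · rw [if_pos hLc, if_neg hRc, hFL, add_zero]
          nlinarith [mul_nonneg hc (mul_nonneg hdj hdL), mul_nonneg hc hM0,
            mul_le_mul_of_nonneg_left hMj hc]
      · by_cases hRc : jn + m < n
        · have hFR : F (jn + m) = cc α m * (2 * M - dd jn * dd (jn + m)) := by
            show cc α ((jn - (jn + m)) + ((jn + m) - jn)) * _ = _
            rw [show (jn - (jn + m)) + ((jn + m) - jn) = m by omega]
          have hdR : 0 ≤ dd (jn + m) := hdd0 _ (by omega)
          rw [if_neg hLc, if_pos hRc, hFR, zero_add]
          nlinarith [mul_nonneg hc (mul_nonneg hdj hdR), mul_nonneg hc hM0,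
            mul_le_mul_of_nonneg_left hMj hc]
        · rw [if_neg hLc, if_neg hRc, add_zero]
          have : (0:ℝ) ≤ 2 * (2 * M - dd jn ^ 2) := by nlinarith
          positivity
    have sumbound : ∑ m ∈ Finset.Icc 1 (n - 1),
        ((if m ≤ jn then F (jn - m) else 0) + (if jn + m < n then F (jn + m) else 0))
        ≤ (-(wcoef α 1)) * (2 * (2 * M - dd jn ^ 2)) := by
      calc _ ≤ ∑ m ∈ Finset.Icc 1 (n - 1), cc α m * (2 * (2 * M - dd jn ^ 2)) :=
            Finset.sum_le_sum perm
        _ = (∑ m ∈ Finset.Icc 1 (n - 1), cc α m) * (2 * (2 * M - dd jn ^ 2)) :=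
            (Finset.sum_mul ..).symm
        _ ≤ (-(wcoef α 1)) * (2 * (2 * M - dd jn ^ 2)) := by
            apply mul_le_mul_of_nonneg_right (cc_sum_le h1 h2 n hn)
            nlinarith [hM1' jn hjlt, hM0]
    have hsumneg : ∑ k ∈ (Finset.range n).erase jn, (-(F k))
        = -(∑ k ∈ (Finset.range n).erase jn, F k) := by
      rw [← Finset.sum_neg_distrib]
    rw [hAG, hAjj, hsumneg, reindex]
    linarith [sumbound]
  -- assemble
  have quad := quad_nonneg A hAsym hAoff hrow u
  have hDWD : ∀ j k : Fin n,
      (Matrix.diagonal (fun i : Fin n => dd (i:ℕ)) * W *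
        Matrix.diagonal (fun i : Fin n => dd (i:ℕ))) j k
      = dd (j:ℕ) * W j k * dd (k:ℕ) := by
    intro j k
    rw [Matrix.mul_diagonal, Matrix.diagonal_mul]
  have e1 : u ⬝ᵥ W.mulVec u = ∑ j : Fin n, ∑ k : Fin n, W j k * u j * u k := by
    simp only [dotProduct, Matrix.mulVec, Finset.mul_sum]
    exact Finset.sum_congr rfl fun j _ => Finset.sum_congr rfl fun k _ => by ring
  have e2 : u ⬝ᵥ ((Matrix.diagonal (fun i : Fin n => dd (i:ℕ)) * W *
      Matrix.diagonal (fun i : Fin n => dd (i:ℕ)))).mulVec u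
      = ∑ j : Fin n, ∑ k : Fin n, (dd (j:ℕ) * W j k * dd (k:ℕ)) * u j * u k := by
    simp only [dotProduct, Matrix.mulVec, Finset.mul_sum]
    refine Finset.sum_congr rfl fun j _ => Finset.sum_congr rfl fun k _ => ?_
    rw [hDWD]
    ring
  have split : ∀ j k : Fin n, A j k * u j * u k
      = 2 * M * (W j k * u j * u k) - (dd (j:ℕ) * W j k * dd (k:ℕ)) * u j * u k := by
    intro j k
    show W j k * (2 * M - dd (j:ℕ) * dd (k:ℕ)) * u j * u k = _
    ring
  have split2 : ∑ j : Fin n, ∑ k : Fin n, A j k * u j * u k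
      = 2 * M * (∑ j : Fin n, ∑ k : Fin n, W j k * u j * u k)
        - ∑ j : Fin n, ∑ k : Fin n, (dd (j:ℕ) * W j k * dd (k:ℕ)) * u j * u k := by
    rw [Finset.mul_sum, ← Finset.sum_sub_distrib]
    refine Finset.sum_congr rfl fun j _ => ?_
    rw [Finset.mul_sum, ← Finset.sum_sub_distrib]
    exact Finset.sum_congr rfl fun k _ => split j k
  rw [e2, e1]
  linarith [quad, split2]

end master


theorem stmt12 (α : ℝ) (hα : 1 < α) (hα2 : α < 2)
    (n : ℕ) (hn : 0 < n) (xL xR h : ℝ) (hh : 0 < h)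
    (hgrid : xR = xL + (n + 1) * h)
    (d : ℝ → ℝ)
    (hd : (ConvexOn ℝ (Set.Icc xL xR) d ∧ ∀ x ∈ Set.Icc xL xR, 0 ≤ d x) ∨
          (ConcaveOn ℝ (Set.Icc xL xR) d ∧ ∀ x ∈ Set.Icc xL xR, d x ≤ 0))
    (W : Matrix (Fin n) (Fin n) ℝ) (hW : W = -(Wmat n α) - (Wmat n α)ᵀ)
    (D : Matrix (Fin n) (Fin n) ℝ)
    (hD : D = Matrix.diagonal (fun i : Fin n => d (xL + ((i : ℕ) + 1) * h))) :
    ∀ u : Fin n → ℝ,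
      u ⬝ᵥ (D * W * D).mulVec u ≤
        2 * (Finset.univ.sup' (Finset.univ_nonempty_iff.mpr ⟨⟨0, hn⟩⟩)
              fun i : Fin n => (d (xL + ((i : ℕ) + 1) * h)) ^ 2) *
          (u ⬝ᵥ W.mulVec u) := by
  intro u
  have hmem : ∀ i : ℕ, i < n → xL + ((i:ℝ) + 1) * h ∈ Set.Icc xL xR := by
    intro i hi
    have hc0 : (0:ℝ) ≤ (i:ℝ) := Nat.cast_nonneg i
    have hcn : (i:ℝ) < (n:ℝ) := by exact_mod_cast hi
    constructor
    · nlinarith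
    · rw [hgrid]
      nlinarith
  have hmid : ∀ j m : ℕ, m ≤ j →
      (1/2 : ℝ) • (xL + (((j - m : ℕ) : ℝ) + 1) * h)
        + (1/2 : ℝ) • (xL + (((j + m : ℕ) : ℝ) + 1) * h)
      = xL + ((j:ℝ) + 1) * h := by
    intro j m hmj
    rw [smul_eq_mul, smul_eq_mul]
    push_cast [Nat.cast_sub hmj]
    ring
  rcases hd with ⟨hcv, hpos⟩ | ⟨hcc, hneg⟩
  · rw [hW, hD]
    have key := master hα hα2 hn (fun i : ℕ => d (xL + ((i:ℝ) + 1) * h))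
      (fun i hi => hpos _ (hmem i hi))
      (by
        intro j m hm hmj hjm
        have hp := hmem (j - m) (by omega)
        have hq := hmem (j + m) (by omega)
        have hx := hcv.2 hp hq (by norm_num : (0:ℝ) ≤ 1/2) (by norm_num : (0:ℝ) ≤ 1/2)
          (by norm_num : (1/2 : ℝ) + 1/2 = 1)
        rw [hmid j m hmj, smul_eq_mul, smul_eq_mul] at hx
        linarith) u
    exact key
  · rw [hW, hD]
    have hDeq : Matrix.diagonal (fun i : Fin n => d (xL + ((i : ℕ) + 1) * h))
        = -Matrix.diagonal (fun i : Fin n => -d (xL + ((i : ℕ) + 1) * h)) := by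
      rw [← Matrix.diagonal_neg]
      congr 1
      funext i
      exact (neg_neg _).symm
    rw [hDeq]
    have hsup : (fun i : Fin n => (d (xL + ((i : ℕ) + 1) * h)) ^ 2)
        = (fun i : Fin n => (-d (xL + ((i : ℕ) + 1) * h)) ^ 2) := by
      funext i
      rw [neg_sq]
    rw [hsup]
    have hmm : ∀ (Dm Wm : Matrix (Fin n) (Fin n) ℝ), (-Dm) * Wm * (-Dm) = Dm * Wm * Dm := by
      intro Dm Wm
      rw [Matrix.neg_mul, Matrix.neg_mul, Matrix.mul_neg, neg_neg]
    rw [hmm]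
    have key := master hα hα2 hn (fun i : ℕ => -d (xL + ((i:ℝ) + 1) * h))
      (fun i hi => by
        have := hneg _ (hmem i hi)
        linarith)
      (by
        intro j m hm hmj hjm
        have hp := hmem (j - m) (by omega)
        have hq := hmem (j + m) (by omega)
        have hx := hcc.2 hp hq (by norm_num : (0:ℝ) ≤ 1/2) (by norm_num : (0:ℝ) ≤ 1/2)
          (by norm_num : (1/2 : ℝ) + 1/2 = 1)
        rw [hmid j m hmj, smul_eq_mul, smul_eq_mul] at hx
        linarith) u
    exact key
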